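/- Let I and J be nonzero ideals of E. If I = Ju for some nonzero u ∈ D, then I*φ and J*φ are isomorphic Drinfeld modules over k. -/

import Mathlib

/- Framework: Drinfeld modules over a finite A-field `k`, realized concretely.
`k{τ}` is the subring of additive endomorphisms of an algebraic closure of `k`
generated by the `q`-power Frobenius `τ` and multiplications by elements of `k`. -/

open Polynomial

noncomputable section

namespace Drinfeld

variable (p m : ℕ) [Fact p.Prime]
variable (Fq k : Type) [Field Fq] [Fintype Fq] [Field k] [Fintype k] [CharP k p]

/-- A fixed algebraic closure of `k`. -/
abbrev Kb := AlgebraicClosure k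

variable (hFq : Fintype.card Fq = p ^ m)

/-- The `q`-power Frobenius `τ : x ↦ x^q` as an additive endomorphism of `Kb k`. -/
def tau : AddMonoid.End (Kb k) where
  toFun x := x ^ Fintype.card Fq
  map_zero' := zero_pow Fintype.card_ne_zero
  map_add' x y := by
    haveI : CharP (Kb k) p :=
      charP_of_injective_algebraMap (algebraMap k (Kb k)).injective p
    simp only [hFq]
    exact add_pow_char_pow x y p m

/-- Multiplication by `c ∈ k` as an additive endomorphism of `Kb k`. -/
def ml (c : k) : AddMonoid.End (Kb k) :=
  AddMonoidHom.mulLeft (algebraMap k (Kb k) c)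

/-- The twisted polynomial ring `k{τ}`. -/
def skewPoly : Subring (AddMonoid.End (Kb k)) :=
  Subring.closure (insert (tau p m Fq k hFq) (Set.range (ml k)))

/-- The additive endomorphism `Σᵢ cᵢ ∘ τ^i` attached to a finitely supported
family of coefficients `c : ℕ →₀ k`. -/
def ofCoeffs (c : ℕ →₀ k) : AddMonoid.End (Kb k) :=
  c.sum fun i a => ml k a * tau p m Fq k hFq ^ i

/-- A Drinfeld module of rank `r` over the `A`-field `(k, γ)`:
a ring homomorphism `φ : A = Fq[T] → k{τ}` with
`φ_a = γ(a) + g₁(a) τ + ⋯ + g_{r·deg a}(a) τ^{r·deg a}` and `g_{r · deg a}(a) ≠ 0`. -/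
structure DrinfeldModule (γ : Polynomial Fq →+* k) (r : ℕ) : Type where
  toRingHom : Polynomial Fq →+* AddMonoid.End (Kb k)
  coeffs : Polynomial Fq → ℕ →₀ k
  eq_ofCoeffs : ∀ a, toRingHom a = ofCoeffs p m Fq k hFq (coeffs a)
  coeff_zero : ∀ a, coeffs a 0 = γ a
  coeff_top : ∀ a, a ≠ 0 → coeffs a (r * a.natDegree) ≠ 0
  coeff_eq_zero : ∀ a i, r * a.natDegree < i → coeffs a i = 0

variable {γ : Polynomial Fq →+* k} {r : ℕ}

/-- The endomorphism ring `End_k(φ)`: the centralizer of `φ(A)` in `k{τ}`. -/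
def EndRing (φ : DrinfeldModule p m Fq k hFq γ r) : Subring (AddMonoid.End (Kb k)) :=
  skewPoly p m Fq k hFq ⊓ Subring.centralizer (Set.range ⇑φ.toRingHom)

/-- `u` is an isogeny `φ → ψ`: a nonzero element of `k{τ}` with `u φ_a = ψ_a u`. -/
def IsIsogeny (φ ψ : DrinfeldModule p m Fq k hFq γ r) (u : AddMonoid.End (Kb k)) : Prop :=
  u ≠ 0 ∧ u ∈ skewPoly p m Fq k hFq ∧ ∀ a, u * φ.toRingHom a = ψ.toRingHom a * u

/-- Two Drinfeld modules are isomorphic when some isogeny between them lies in `k^×`. -/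
def Isomorphic (φ ψ : DrinfeldModule p m Fq k hFq γ r) : Prop :=
  ∃ c : k, c ≠ 0 ∧ ∀ a, ml k c * φ.toRingHom a = ψ.toRingHom a * ml k c

/-- The left ideal `k{τ}·s` of `k{τ}` generated by a subset `s`. -/
def leftSpan (s : Set (AddMonoid.End (Kb k))) : AddSubgroup (AddMonoid.End (Kb k)) :=
  AddSubgroup.closure {y | ∃ w ∈ skewPoly p m Fq k hFq, ∃ x ∈ s, y = w * x}

/-- `u` generates the left ideal `k{τ}·s` of `k{τ}`: `k{τ}s = k{τ}u`.
(Such a `u = u_I` exists by the right division algorithm in `k{τ}`.) -/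
def IsIdealGen (s : Set (AddMonoid.End (Kb k))) (u : AddMonoid.End (Kb k)) : Prop :=
  u ∈ skewPoly p m Fq k hFq ∧
    (leftSpan p m Fq k hFq s : Set (AddMonoid.End (Kb k))) =
      {y | ∃ w ∈ skewPoly p m Fq k hFq, y = w * u}

/-- `I` is an ideal of the (commutative) subring `E` of `k{τ}`. -/
def IsIdealOf (E : Subring (AddMonoid.End (Kb k))) (I : Set (AddMonoid.End (Kb k))) : Prop :=
  I ⊆ E ∧ (0 : AddMonoid.End (Kb k)) ∈ I ∧
    (∀ x ∈ I, ∀ y ∈ I, x + y ∈ I) ∧ (∀ x ∈ I, -x ∈ I) ∧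
    (∀ e ∈ E, ∀ x ∈ I, e * x ∈ I) ∧ (∀ e ∈ E, ∀ x ∈ I, x * e ∈ I)

/-- Membership in `D = End_k(φ) ⊗_A F = Frac(End_k(φ))` for an element of `k{τ}`:
`x ∈ D` iff `x·φ_a ∈ End_k(φ)` for some nonzero `a ∈ A`, i.e. `x = e/φ_a`. -/
def MemD (φ : DrinfeldModule p m Fq k hFq γ r) (x : AddMonoid.End (Kb k)) : Prop :=
  ∃ a : Polynomial Fq, a ≠ 0 ∧ x * φ.toRingHom a ∈ EndRing p m Fq k hFq φ

/-- `I` is a kernel ideal: `(k{τ}I) ∩ D = I`. -/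
def IsKernelIdeal (φ : DrinfeldModule p m Fq k hFq γ r)
    (I : Set (AddMonoid.End (Kb k))) : Prop :=
  {x | x ∈ leftSpan p m Fq k hFq I ∧ MemD p m Fq k hFq φ x} = I

/-- The subring `A[π] = φ(A)[π]` of `k{τ}`, where `π = τ^n` is the Frobenius of `k`. -/
def ApirOp (n : ℕ) (φ : DrinfeldModule p m Fq k hFq γ r) :
    Subring (AddMonoid.End (Kb k)) :=
  Subring.closure (insert (tau p m Fq k hFq ^ n) (Set.range ⇑φ.toRingHom))

/-- `φ` has height `H` (relative to the monic generator `P` of `𝔭 = ker γ`):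
the smallest `τ`-degree of a nonzero term of `φ_P` equals `H · deg P`, i.e. `φ_P` is
right-divisible by `τ^{H·deg P}` but not by `τ^{H·deg P + 1}`. -/
def HasHeight (φ : DrinfeldModule p m Fq k hFq γ r) (P : Polynomial Fq) (H : ℕ) : Prop :=
  (∃ u ∈ skewPoly p m Fq k hFq,
      φ.toRingHom P = u * tau p m Fq k hFq ^ (H * P.natDegree)) ∧
    ¬∃ u ∈ skewPoly p m Fq k hFq,
      φ.toRingHom P = u * tau p m Fq k hFq ^ (H * P.natDegree + 1)

/-- `I = J·u` for some nonzero `u ∈ D = Frac(E)`, written as `u = e/φ_a` with `e ∈ E`,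
`a ∈ A` both nonzero; equivalently `I·φ_a = J·e`. -/
def LinEquiv (φ : DrinfeldModule p m Fq k hFq γ r) (E : Subring (AddMonoid.End (Kb k)))
    (I J : Set (AddMonoid.End (Kb k))) : Prop :=
  ∃ e ∈ E, e ≠ 0 ∧ ∃ a : Polynomial Fq, a ≠ 0 ∧
    (fun x => x * φ.toRingHom a) '' I = (fun y => y * e) '' J

/-- The additive polynomial `u(X) ∈ k[X]` attached to `u ∈ k{τ}` (the unique polynomial
inducing `u` on the algebraic closure, if it exists; junk value `0` otherwise). -/
def toPoly (u : AddMonoid.End (Kb k)) : Polynomial k :=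
  letI := Classical.propDecidable (∃ P : Polynomial k, ∀ x : Kb k, Polynomial.aeval x P = u x)
  if h : ∃ P : Polynomial k, ∀ x : Kb k, Polynomial.aeval x P = u x then h.choose else 0

end Drinfeld


namespace Drinfeld

section Aux

set_option linter.unusedSectionVars false

variable (p m : ℕ) [Fact p.Prime]
variable (Fq k : Type) [Field Fq] [Fintype Fq] [Field k] [Fintype k] [CharP k p]
variable (hFq : Fintype.card Fq = p ^ m)

-- test basic applies
example (x : Kb k) : tau p m Fq k hFq x = x ^ Fintype.card Fq := rfl
example (c : k) (x : Kb k) : ml k c x = algebraMap k (Kb k) c * x := rfl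

lemma tau_pow_apply (i : ℕ) (x : Kb k) :
    (tau p m Fq k hFq ^ i) x = x ^ (Fintype.card Fq ^ i) := by
  induction i generalizing x with
  | zero => simp
  | succ n ih =>
    rw [pow_succ, pow_succ]
    show (tau p m Fq k hFq ^ n) (tau p m Fq k hFq x) = _
    rw [show tau p m Fq k hFq x = x ^ Fintype.card Fq from rfl, ih, ← pow_mul, mul_comm]

/-- `u` is induced by a polynomial with coefficients in (the image of) `k`. -/
def IsPolyK (u : AddMonoid.End (Kb k)) : Prop :=
  ∃ P : Polynomial ((algebraMap k (Kb k)).range),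
    ∀ x : Kb k, u x = (P.map (algebraMap k (Kb k)).range.subtype).eval x

lemma isPolyK_of_mem {u : AddMonoid.End (Kb k)} (hu : u ∈ skewPoly p m Fq k hFq) :
    IsPolyK k u := by
  induction hu using Subring.closure_induction with
  | mem x hx =>
    rcases hx with h | ⟨c, rfl⟩
    · refine ⟨X ^ Fintype.card Fq, fun x => ?_⟩
      subst h
      simp only [Polynomial.map_pow, map_X, eval_pow, eval_X]
      rfl
    · refine ⟨C ⟨algebraMap k (Kb k) c, ⟨c, rfl⟩⟩ * X, fun x => ?_⟩
      simp only [Polynomial.map_mul, map_C, map_X, eval_mul, eval_C, eval_X]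
      rfl
  | zero => exact ⟨0, fun x => by simp⟩
  | one => exact ⟨X, fun x => by simp⟩
  | add x y hx hy ihx ihy =>
    obtain ⟨P, hP⟩ := ihx; obtain ⟨Q, hQ⟩ := ihy
    exact ⟨P + Q, fun x => by rw [Polynomial.map_add, eval_add, ← hP x, ← hQ x]; rfl⟩
  | neg x hx ihx =>
    obtain ⟨P, hP⟩ := ihx
    exact ⟨-P, fun x => by rw [Polynomial.map_neg, eval_neg, ← hP x]; rfl⟩
  | mul x y hx hy ihx ihy =>
    obtain ⟨P, hP⟩ := ihx; obtain ⟨Q, hQ⟩ := ihy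
    refine ⟨P.comp Q, fun x => ?_⟩
    rw [Polynomial.map_comp, eval_comp, ← hQ x, ← hP (y x)]
    rfl

lemma surjective_of_mem {u : AddMonoid.End (Kb k)} (hu : u ∈ skewPoly p m Fq k hFq)
    (h0 : u ≠ 0) : Function.Surjective u := by
  obtain ⟨P, hP⟩ := isPolyK_of_mem p m Fq k hFq hu
  set Pm := P.map (algebraMap k (Kb k)).range.subtype with hPm
  have hdeg : Pm.natDegree ≠ 0 := by
    intro h
    apply h0
    have hc : Pm.coeff 0 = 0 := by
      rw [Polynomial.coeff_zero_eq_eval_zero, ← hP 0, map_zero]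
    apply AddMonoid.End.ext
    intro x
    rw [hP x, Polynomial.eq_C_of_natDegree_eq_zero h, hc]
    simp
  intro y
  have hne : (Pm - C y).degree ≠ 0 := by
    intro h
    exact hdeg (by
      have := Polynomial.natDegree_eq_zero_iff_degree_le_zero.mpr (le_of_eq h)
      rwa [Polynomial.natDegree_sub_C] at this)
  obtain ⟨x, hx⟩ := IsAlgClosed.exists_root _ hne
  refine ⟨x, ?_⟩
  have := hx
  rw [Polynomial.IsRoot, Polynomial.eval_sub, Polynomial.eval_C, sub_eq_zero] at this
  rw [hP x, this]

lemma cancel_right {g f h : AddMonoid.End (Kb k)} (hg : Function.Surjective g)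
    (H : f * g = h * g) : f = h := by
  apply AddMonoidHom.ext
  intro y
  obtain ⟨x, rfl⟩ := hg y
  exact congrFun (congrArg DFunLike.coe H) x

lemma eq_ml_of_mul_eq_one {w w' : AddMonoid.End (Kb k)}
    (hw : w ∈ skewPoly p m Fq k hFq) (hw' : w' ∈ skewPoly p m Fq k hFq)
    (h : w * w' = 1) : ∃ c : k, c ≠ 0 ∧ w' = ml k c := by
  obtain ⟨P, hP⟩ := isPolyK_of_mem p m Fq k hFq hw
  obtain ⟨Q, hQ⟩ := isPolyK_of_mem p m Fq k hFq hw'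
  set f := (algebraMap k (Kb k)).range.subtype with hf
  have hcomp : (P.map f).comp (Q.map f) = X := by
    apply Polynomial.funext
    intro x
    rw [eval_comp, ← hQ x, ← hP (w' x), eval_X]
    exact congrFun (congrArg DFunLike.coe h) x
  have hdeg : (Q.map f).natDegree = 1 := by
    have := Polynomial.natDegree_comp (p := P.map f) (q := Q.map f)
    rw [hcomp, Polynomial.natDegree_X] at this
    exact Nat.eq_one_of_mul_eq_one_left this.symm
  have hc0 : (Q.map f).coeff 0 = 0 := by
    rw [Polynomial.coeff_zero_eq_eval_zero, ← hQ 0, map_zero]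
  have hform := Polynomial.eq_X_add_C_of_natDegree_le_one (le_of_eq hdeg)
  rw [hc0, map_zero, add_zero] at hform
  have ha : (Q.map f).coeff 1 ≠ 0 := by
    intro h0
    rw [h0, map_zero, zero_mul] at hform
    rw [hform] at hdeg
    simp at hdeg
  obtain ⟨c, hc⟩ : ∃ c : k, algebraMap k (Kb k) c = (Q.map f).coeff 1 := by
    have : (Q.map f).coeff 1 ∈ (algebraMap k (Kb k)).range := by
      rw [Polynomial.coeff_map]; exact (Q.coeff 1).2
    exact this
  refine ⟨c, ?_, ?_⟩
  · intro h0; apply ha; rw [← hc, h0, map_zero]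
  · apply AddMonoid.End.ext
    intro x
    rw [hQ x, hform]
    simp only [eval_mul, eval_C, eval_X]
    rw [← hc]
    rfl


lemma ofCoeffs_mem (c : ℕ →₀ k) : ofCoeffs p m Fq k hFq c ∈ skewPoly p m Fq k hFq := by
  rw [ofCoeffs, Finsupp.sum]
  apply sum_mem
  intro i _
  exact Subring.mul_mem _
    (Subring.subset_closure (Set.mem_insert_iff.mpr (Or.inr ⟨_, rfl⟩)))
    (Subring.pow_mem _ (Subring.subset_closure (Set.mem_insert _ _)) _)

lemma ofCoeffs_apply (c : ℕ →₀ k) (x : Kb k) :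
    ofCoeffs p m Fq k hFq c x
      = c.sum fun i a => algebraMap k (Kb k) a * x ^ (Fintype.card Fq ^ i) := by
  rw [ofCoeffs, Finsupp.sum, Finsupp.sum]; erw [AddMonoidHom.finset_sum_apply]
  refine Finset.sum_congr rfl fun i _ => ?_
  show ml k (c i) ((tau p m Fq k hFq ^ i) x) = _
  rw [tau_pow_apply]
  rfl

lemma ofCoeffs_ne_zero {c : ℕ →₀ k} (hc : c ≠ 0) :
    ofCoeffs p m Fq k hFq c ≠ 0 := by
  obtain ⟨i₀, hi₀⟩ : ∃ i, c i ≠ 0 := by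
    by_contra h
    push_neg at h
    exact hc (Finsupp.ext h)
  intro h0
  set q := Fintype.card Fq with hq
  have hq2 : 2 ≤ q := Fintype.one_lt_card
  set Q : Polynomial (Kb k) := c.sum fun i a => C (algebraMap k (Kb k) a) * X ^ (q ^ i)
    with hQdef
  have hev : ∀ x : Kb k, Q.eval x = 0 := by
    intro x
    have h1 : ofCoeffs p m Fq k hFq c x = 0 := by rw [h0]; rfl
    rw [← h1, ofCoeffs_apply, hQdef, Finsupp.sum, Finsupp.sum, Polynomial.eval_finset_sum]
    refine Finset.sum_congr rfl fun i _ => ?_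
    simp
    exact Or.inl rfl
  have hQ0 : Q = 0 := Polynomial.funext (by simpa using hev)
  have hcoeff : Q.coeff (q ^ i₀) = algebraMap k (Kb k) (c i₀) := by
    rw [hQdef, Finsupp.sum, Polynomial.finset_sum_coeff]
    rw [Finset.sum_eq_single i₀]
    · simp
    · intro i hi hne
      rw [Polynomial.coeff_C_mul, Polynomial.coeff_X_pow, if_neg, mul_zero]
      exact fun h => hne (Nat.pow_right_injective hq2 h).symm
    · intro h
      exact absurd (Finsupp.mem_support_iff.mpr hi₀) h
  rw [hQ0, Polynomial.coeff_zero] at hcoeff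
  exact hi₀ ((_root_.map_eq_zero _).mp hcoeff.symm)

end Aux

section Aux2

variable {p m : ℕ} [Fact p.Prime]
variable {Fq k : Type} [Field Fq] [Fintype Fq] [Field k] [Fintype k] [CharP k p]
variable {hFq : Fintype.card Fq = p ^ m}

set_option linter.unusedSectionVars false

lemma phi_mem {γ : Polynomial Fq →+* k} {r : ℕ} (φ : DrinfeldModule p m Fq k hFq γ r)
    (a : Polynomial Fq) : φ.toRingHom a ∈ skewPoly p m Fq k hFq := by
  rw [φ.eq_ofCoeffs]
  exact ofCoeffs_mem p m Fq k hFq _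

lemma phi_ne_zero {γ : Polynomial Fq →+* k} {r : ℕ} (φ : DrinfeldModule p m Fq k hFq γ r)
    {a : Polynomial Fq} (ha : a ≠ 0) : φ.toRingHom a ≠ 0 := by
  rw [φ.eq_ofCoeffs]
  apply ofCoeffs_ne_zero
  intro h
  exact φ.coeff_top a ha (by rw [h]; rfl)

lemma mem_leftSpan_self {s : Set (AddMonoid.End (Kb k))} {x : AddMonoid.End (Kb k)}
    (hx : x ∈ s) : x ∈ leftSpan p m Fq k hFq s :=
  AddSubgroup.subset_closure ⟨1, Subring.one_mem _, x, hx, (one_mul x).symm⟩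

lemma span_transfer {I J : Set (AddMonoid.End (Kb k))} {A B : AddMonoid.End (Kb k)}
    (h : ∀ x ∈ I, ∃ y ∈ J, x * A = y * B) :
    ∀ z ∈ leftSpan p m Fq k hFq I, ∃ z' ∈ leftSpan p m Fq k hFq J, z * A = z' * B := by
  intro z hz
  induction hz using AddSubgroup.closure_induction with
  | mem x hx =>
    obtain ⟨w, hw, x', hx', rfl⟩ := hx
    obtain ⟨y, hy, hxy⟩ := h x' hx'
    exact ⟨w * y, AddSubgroup.subset_closure ⟨w, hw, y, hy, rfl⟩,
      by rw [mul_assoc, hxy, mul_assoc]⟩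
  | zero => exact ⟨0, zero_mem _, by rw [zero_mul, zero_mul]⟩
  | add x y hx hy ihx ihy =>
    obtain ⟨zx, hzx, hex⟩ := ihx
    obtain ⟨zy, hzy, hey⟩ := ihy
    exact ⟨zx + zy, add_mem hzx hzy, by rw [add_mul, add_mul, hex, hey]⟩
  | neg x hx ihx =>
    obtain ⟨zx, hzx, hex⟩ := ihx
    exact ⟨-zx, neg_mem hzx, 
      (neg_mul x A).trans ((congrArg Neg.neg hex).trans (neg_mul zx B).symm)⟩

end Aux2

end Drinfeld

namespace Drinfeld

/-- Let `I` and `J` be nonzero ideals of `E = End_k(φ)` (assumed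
commutative).  If `I = J·u` for some nonzero `u ∈ D = E ⊗_A F` (encoded as `u = e/φ_a`
with `e ∈ E`, `a ∈ A` nonzero, i.e. `I·φ_a = J·e`), then `I*φ` and `J*φ` are isomorphic
Drinfeld modules over `k`.  Here `I*φ` is any Drinfeld module `ψI` with
`(k{τ})I = (k{τ})u_I` and `u_I φ_a = ψI_a u_I` for all `a`. -/
theorem statement13
    (p m : ℕ) [Fact p.Prime] (Fq k : Type) [Field Fq] [Fintype Fq]
    [Field k] [Fintype k] [CharP k p] (hFq : Fintype.card Fq = p ^ m)
    (γ : Polynomial Fq →+* k) (r : ℕ) (φ : DrinfeldModule p m Fq k hFq γ r)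
    (hcomm : ∀ x ∈ EndRing p m Fq k hFq φ, ∀ y ∈ EndRing p m Fq k hFq φ, x * y = y * x)
    (I J : Set (AddMonoid.End (Kb k)))
    (hI : IsIdealOf k (EndRing p m Fq k hFq φ) I) (hI0 : I ≠ {0})
    (hJ : IsIdealOf k (EndRing p m Fq k hFq φ) J) (hJ0 : J ≠ {0})
    (hlin : LinEquiv p m Fq k hFq φ (EndRing p m Fq k hFq φ) I J)
    (uI uJ : AddMonoid.End (Kb k)) (ψI ψJ : DrinfeldModule p m Fq k hFq γ r)
    (hgenI : IsIdealGen p m Fq k hFq I uI)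
    (hstarI : ∀ a, uI * φ.toRingHom a = ψI.toRingHom a * uI)
    (hgenJ : IsIdealGen p m Fq k hFq J uJ)
    (hstarJ : ∀ a, uJ * φ.toRingHom a = ψJ.toRingHom a * uJ) :
    Isomorphic p m Fq k hFq ψI ψJ := by
  classical
  obtain ⟨e, heE, he0, a, ha0, himg⟩ := hlin
  have heC : ∀ b, φ.toRingHom b * e = e * φ.toRingHom b := fun b =>
    (Subring.mem_centralizer_iff.mp heE.2) _ ⟨b, rfl⟩
  set φa := φ.toRingHom a with hφa
  have hφaS : φa ∈ skewPoly p m Fq k hFq := phi_mem φ a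
  have hφa0 : φa ≠ 0 := phi_ne_zero φ ha0
  have hφaSurj : Function.Surjective φa := surjective_of_mem p m Fq k hFq hφaS hφa0
  -- uI is nonzero
  obtain ⟨x0, hx0I, hx00⟩ : ∃ x ∈ I, x ≠ (0 : AddMonoid.End (Kb k)) := by
    by_contra h
    push_neg at h
    apply hI0
    ext y
    exact ⟨fun hy => h y hy, fun hy => hy ▸ hI.2.1⟩
  have hx0span : x0 ∈ leftSpan p m Fq k hFq I := mem_leftSpan_self hx0I
  obtain ⟨w0, hw0, hx0eq⟩ : ∃ w ∈ skewPoly p m Fq k hFq, x0 = w * uI := by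
    have := hgenI.2 ▸ (show x0 ∈ (leftSpan p m Fq k hFq I : Set _) from hx0span)
    exact this
  have huI0 : uI ≠ 0 := by
    rintro rfl
    exact hx00 (by rw [hx0eq, mul_zero])
  have huIsurj : Function.Surjective uI :=
    surjective_of_mem p m Fq k hFq hgenI.1 huI0
  have hsurj : Function.Surjective (uI * φa) := by
    have : ⇑(uI * φa) = ⇑uI ∘ ⇑φa := rfl
    rw [this]
    exact huIsurj.comp hφaSurj
  -- transfer between ideals
  have h1 : ∀ x ∈ I, ∃ y ∈ J, x * φa = y * e := by
    intro x hx
    have : x * φa ∈ (fun y => y * e) '' J := himg ▸ ⟨x, hx, rfl⟩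
    obtain ⟨y, hy, hye⟩ := this
    exact ⟨y, hy, hye.symm⟩
  have h2 : ∀ y ∈ J, ∃ x ∈ I, y * e = x * φa := by
    intro y hy
    have : y * e ∈ (fun x => x * φa) '' I := himg ▸ ⟨y, hy, rfl⟩
    obtain ⟨x, hx, hxe⟩ := this
    exact ⟨x, hx, hxe.symm⟩
  have huImem : uI ∈ leftSpan p m Fq k hFq I := by
    have : uI ∈ {y | ∃ w ∈ skewPoly p m Fq k hFq, y = w * uI} :=
      ⟨1, Subring.one_mem _, (one_mul uI).symm⟩
    rw [← hgenI.2] at this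
    exact this
  have huJmem : uJ ∈ leftSpan p m Fq k hFq J := by
    have : uJ ∈ {y | ∃ w ∈ skewPoly p m Fq k hFq, y = w * uJ} :=
      ⟨1, Subring.one_mem _, (one_mul uJ).symm⟩
    rw [← hgenJ.2] at this
    exact this
  obtain ⟨z, hzJ, heq1⟩ := span_transfer h1 uI huImem
  obtain ⟨w, hwS, hzw⟩ : ∃ w ∈ skewPoly p m Fq k hFq, z = w * uJ := by
    have := hgenJ.2 ▸ (show z ∈ (leftSpan p m Fq k hFq J : Set _) from hzJ)
    exact this
  obtain ⟨z', hz'I, heq2⟩ := span_transfer h2 uJ huJmem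
  obtain ⟨w', hw'S, hz'w'⟩ : ∃ w ∈ skewPoly p m Fq k hFq, z' = w * uI := by
    have := hgenI.2 ▸ (show z' ∈ (leftSpan p m Fq k hFq I : Set _) from hz'I)
    exact this
  -- uI * φa = (w * w') * (uI * φa)
  have key : (w * w') * (uI * φa) = 1 * (uI * φa) := by
    rw [one_mul, mul_assoc, ← mul_assoc w', ← hz'w', ← heq2, ← mul_assoc, ← hzw, ← heq1]
  have hww' : w * w' = 1 := cancel_right k hsurj key
  obtain ⟨c, hc0, hmlc⟩ := eq_ml_of_mul_eq_one p m Fq k hFq hwS hw'S hww'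
  have hkey2 : uJ * e = ml k c * (uI * φa) := by
    rw [heq2, hz'w', hmlc, mul_assoc]
  refine ⟨c, hc0, fun b => ?_⟩
  apply cancel_right k hsurj
  have hab : φa * φ.toRingHom b = φ.toRingHom b * φa := by
    rw [hφa, ← map_mul, ← map_mul, mul_comm]
  calc (ml k c * ψI.toRingHom b) * (uI * φa)
      = ml k c * ((ψI.toRingHom b * uI) * φa) := by
        rw [mul_assoc, mul_assoc]
    _ = ml k c * ((uI * φ.toRingHom b) * φa) := by rw [← hstarI b]
    _ = (ml k c * (uI * φa)) * φ.toRingHom b := by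
        rw [mul_assoc uI, ← hab, ← mul_assoc uI, ← mul_assoc]
    _ = (uJ * e) * φ.toRingHom b := by rw [← hkey2]
    _ = uJ * (φ.toRingHom b * e) := by rw [mul_assoc, ← heC b]
    _ = (ψJ.toRingHom b * uJ) * e := by rw [← mul_assoc, hstarJ b]
    _ = ψJ.toRingHom b * (uJ * e) := by rw [mul_assoc]
    _ = (ψJ.toRingHom b * ml k c) * (uI * φa) := by rw [hkey2, mul_assoc]

end Drinfeld
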